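/- In the regime $\alpha\in(1-e^{-c},1-e^{-c-1}]$ with $K=\ln\big(\frac{\alpha e^c}{1-(1-\alpha)e^c}\big)$, define $v(x)=x$ for $x\in[0,K]\cup\mathbb{N}$ and $v(x)=K$ otherwise. Then $v$ solves the Bellman equation $e^{v(x)}=e^x\wedge e^c(\alpha e^{v(0)}+(1-\alpha)e^{v(x+1)})$ on $[0,\infty)$, and $v$ differs from both $x\mapsto x$ and $x\mapsto x\wedge K$. -/

import Mathlib

open scoped Classical

/-- The interpolating function of Statement 14: `v(x) = x` on `[0,K] ∪ ℕ` and
`v(x) = K` otherwise. -/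
noncomputable def interpSol (K x : ℝ) : ℝ :=
  if x ≤ K ∨ ∃ n : ℕ, x = n then x else K

/-! With `v 0 = 0` the right-hand side of the Bellman equation is `T (e^{v(x+1)})` for the
affine map `T y = e^c (α + (1 - α) y)`. The left edge of the regime, `(1 - α) e^c < 1`, makes
`e^K = α e^c / (1 - (1 - α) e^c)` the fixed point of `T`; the right edge,
`(1 - α) e^{c+1} ≥ 1`, gives `e^x ≤ T (e^{x+1})`. So on `[0, K] ∪ ℕ` the minimum is attained
by `e^x`, while off this set `x + 1` is off it as well and both sides equal `e^K = T (e^K)`. -/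

open Real

section Regime

variable {c α : ℝ}

lemma pos_of_one_sub_exp_neg_lt (hc : 0 < c) (h : 1 - exp (-c) < α) : 0 < α := by
  have : exp (-c) < 1 := exp_lt_one_iff.mpr (neg_neg_of_pos hc)
  linarith

lemma one_sub_mul_exp_pos (h : 1 - exp (-c) < α) : 0 < 1 - (1 - α) * exp c := by
  have : (1 - α) * exp c < exp (-c) * exp c :=
    mul_lt_mul_of_pos_right (by linarith) (exp_pos c)
  rw [← exp_add, neg_add_cancel, exp_zero] at this
  linarith

lemma one_le_one_sub_mul_exp_add_one (h : α ≤ 1 - exp (-c - 1)) :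
    1 ≤ (1 - α) * exp (c + 1) := by
  have : exp (-c - 1) * exp (c + 1) ≤ (1 - α) * exp (c + 1) :=
    mul_le_mul_of_nonneg_right (by linarith) (exp_pos _).le
  rwa [← exp_add, show -c - 1 + (c + 1) = 0 by ring, exp_zero] at this

lemma exp_eq_of_eq_log_div {K : ℝ} (hα : 0 < α) (hD : 0 < 1 - (1 - α) * exp c)
    (hK : K = log (α * exp c / (1 - (1 - α) * exp c))) :
    exp K = exp c * (α + (1 - α) * exp K) := by
  have hEK : exp K * (1 - (1 - α) * exp c) = α * exp c := by
    rw [hK, exp_log (div_pos (mul_pos hα (exp_pos c)) hD), div_mul_cancel₀ _ hD.ne']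
  linear_combination hEK

lemma exp_le_of_one_le_one_sub_mul_exp_add_one (hα : 0 ≤ α) (h : 1 ≤ (1 - α) * exp (c + 1))
    (x : ℝ) : exp x ≤ exp c * (α + (1 - α) * exp (x + 1)) :=
  calc exp x ≤ exp x * ((1 - α) * exp (c + 1)) := le_mul_of_one_le_right (exp_pos x).le h
    _ = exp c * ((1 - α) * exp (x + 1)) := by rw [exp_add, exp_add]; ring
    _ ≤ exp c * (α + (1 - α) * exp (x + 1)) := by gcongr; linarith

end Regime

section InterpSol

variable {K x : ℝ}

lemma interpSol_of_mem (h : x ≤ K ∨ ∃ n : ℕ, x = n) : interpSol K x = x := if_pos h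

lemma interpSol_of_not_mem (h : ¬(x ≤ K ∨ ∃ n : ℕ, x = n)) : interpSol K x = K := if_neg h

lemma interpSol_natCast (K : ℝ) (n : ℕ) : interpSol K n = n :=
  interpSol_of_mem (.inr ⟨n, rfl⟩)

lemma interpSol_zero (K : ℝ) : interpSol K 0 = 0 := by exact_mod_cast interpSol_natCast K 0

lemma exists_natCast_eq_add_one_iff (hx : 0 ≤ x) :
    (∃ n : ℕ, x + 1 = n) ↔ ∃ n : ℕ, x = n := by
  constructor
  · rintro ⟨_ | m, hm⟩
    · push_cast at hm; linarith
    · exact ⟨m, by push_cast at hm; linarith⟩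
  · rintro ⟨n, rfl⟩
    exact ⟨n + 1, by push_cast; ring⟩

lemma interpSol_bellman {T : ℝ → ℝ} (hfix : exp K = T (exp K))
    (hdom : ∀ y, exp y ≤ T (exp (y + 1))) (hx : 0 ≤ x) :
    exp (interpSol K x) = min (exp x) (T (exp (interpSol K (x + 1)))) := by
  by_cases hS : x ≤ K ∨ ∃ n : ℕ, x = n
  · rw [interpSol_of_mem hS]
    by_cases hS₁ : x + 1 ≤ K ∨ ∃ n : ℕ, x + 1 = n
    · rw [interpSol_of_mem hS₁, min_eq_left (hdom x)]
    · rw [exists_natCast_eq_add_one_iff hx] at hS₁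
      have hxK : x ≤ K := by tauto
      rw [interpSol_of_not_mem (by rwa [exists_natCast_eq_add_one_iff hx]), ← hfix,
        min_eq_left (exp_le_exp.mpr hxK)]
  · have hKx : K < x := lt_of_not_ge fun h => hS (.inl h)
    have hS₁ : ¬(x + 1 ≤ K ∨ ∃ n : ℕ, x + 1 = n) := by
      rw [exists_natCast_eq_add_one_iff hx]
      rintro (h | h)
      · linarith
      · exact hS (.inr h)
    rw [interpSol_of_not_mem hS, interpSol_of_not_mem hS₁, ← hfix,
      min_eq_right (exp_le_exp.mpr hKx.le)]

lemma natCast_add_half_ne_natCast (n m : ℕ) : (n : ℝ) + 1 / 2 ≠ m := by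
  intro h
  have : ((2 * n + 1 : ℕ) : ℝ) = ((2 * m : ℕ) : ℝ) := by push_cast; linarith
  have := Nat.cast_injective this
  omega

lemma interpSol_natCeil_add_half (K : ℝ) : interpSol K (⌈K⌉₊ + 1 / 2) = K := by
  have := Nat.le_ceil K
  refine interpSol_of_not_mem ?_
  rintro (h | ⟨m, hm⟩)
  · linarith
  · exact natCast_add_half_ne_natCast _ _ hm

end InterpSol

/-- in the regime `α ∈ (1 - e^{-c}, 1 - e^{-c-1}]`, with
`K = ln(α e^c / (1 - (1-α)e^c))`, the function `v(x) = x` for `x ∈ [0,K] ∪ ℕ` and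
`v(x) = K` otherwise solves the Bellman equation
`e^{v x} = e^x ⊓ e^c (α e^{v 0} + (1-α) e^{v(x+1)})` on `[0,∞)`, and `v` differs from
both `x ↦ x` and `x ↦ x ⊓ K`. -/
theorem stmt14 (c α : ℝ) (hc : 0 < c)
    (hα : α ∈ Set.Ioc (1 - Real.exp (-c)) (1 - Real.exp (-c - 1)))
    (K : ℝ) (hK : K = Real.log (α * Real.exp c / (1 - (1 - α) * Real.exp c))) :
    (∀ x : ℝ, 0 ≤ x →
      Real.exp (interpSol K x)
        = min (Real.exp x)
          (Real.exp c *
            (α * Real.exp (interpSol K 0) + (1 - α) * Real.exp (interpSol K (x + 1)))))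
    ∧ (∃ x : ℝ, 0 ≤ x ∧ interpSol K x ≠ x)
    ∧ (∃ x : ℝ, 0 ≤ x ∧ interpSol K x ≠ min x K) := by
  obtain ⟨hα₁, hα₂⟩ := hα
  have hαpos := pos_of_one_sub_exp_neg_lt hc hα₁
  have hceil := Nat.le_ceil K
  refine ⟨fun x hx =>
    interpSol_bellman (T := fun y => exp c * (α * exp (interpSol K 0) + (1 - α) * y)) ?_ ?_ hx,
    ⟨⌈K⌉₊ + 1 / 2, by positivity, ?_⟩, ⟨⌈K⌉₊ + 1, by positivity, ?_⟩⟩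
  · rw [interpSol_zero, exp_zero, mul_one]
    exact exp_eq_of_eq_log_div hαpos (one_sub_mul_exp_pos hα₁) hK
  · rw [interpSol_zero, exp_zero, mul_one]
    exact exp_le_of_one_le_one_sub_mul_exp_add_one hαpos.le
      (one_le_one_sub_mul_exp_add_one hα₂)
  · rw [interpSol_natCeil_add_half]
    linarith
  · rw [← Nat.cast_add_one, interpSol_natCast, Nat.cast_add_one, min_eq_right (by linarith)]
    linarith
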